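/- Fix s ∈ ℝ, ρ > 0, and let f : ℝ → ℝ be of class C⁴ on an open neighborhood of s. Then there exist M > 0 and k₀ > 0 such that for all 0 < k < k₀ and all η ∈ ℝ with |η| ≤ ρ·k: | f'(s+η) − (1/(6k³))·[ (−3η² + k²)·f(s−2k) + (9η² + 6kη − 6k²)·f(s−k) + (−9η² − 12kη + 3k²)·f(s) + (3η² + 6kη + 2k²)·f(s+k) ] | ≤ M·k³. -/
import Mathlib
open Set
open scoped Nat

lemma iterWithin_eq {n : WithTop ℕ∞} {f : ℝ → ℝ} {U : Set ℝ} (hU : IsOpen U)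
    (hf : ContDiffOn ℝ n f U) {a b : ℝ} (hab : a < b) (hsub : Icc a b ⊆ U)
    {x : ℝ} (hx : x ∈ Icc a b) {m : ℕ} (hm : (m : WithTop ℕ∞) ≤ n) :
    iteratedDerivWithin m f (Icc a b) x = iteratedDeriv m f x := by
  rw [iteratedDerivWithin_eq_iteratedFDerivWithin, iteratedDeriv_eq_iteratedFDeriv]
  congr 1
  have H : HasFTaylorSeriesUpToOn n f (ftaylorSeriesWithin ℝ f U) U :=
    hf.ftaylorSeriesWithin hU.uniqueDiffOn
  have H2 := (H.mono hsub).eq_iteratedFDerivWithin_of_uniqueDiffOn hm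
      (uniqueDiffOn_Icc hab) hx
  rw [← H2]
  exact iteratedFDerivWithin_of_isOpen m hU (hsub hx)

lemma taylor_right (F : ℝ → ℝ) (n : ℕ) {U : Set ℝ} (hU : IsOpen U)
    (hF : ContDiffOn ℝ (n + 1 : ℕ) F U) (x₀ r K : ℝ) (hr : 0 < r)
    (hsub : Icc x₀ (x₀ + r) ⊆ U)
    (hK : ∀ y ∈ Icc x₀ (x₀ + r), |iteratedDeriv (n + 1) F y| ≤ K)
    (h : ℝ) (h0 : 0 ≤ h) (hh : h ≤ r) :
    |F (x₀ + h) - ∑ i ∈ Finset.range (n + 1),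
        (i ! : ℝ)⁻¹ * h ^ i * iteratedDeriv i F x₀|
      ≤ K * h ^ (n + 1) / n ! := by
  have hab : x₀ ≤ x₀ + r := by linarith
  have hab' : x₀ < x₀ + r := by linarith
  have hx : x₀ + h ∈ Icc x₀ (x₀ + r) := ⟨by linarith, by linarith⟩
  have hFIcc : ContDiffOn ℝ (n + 1 : ℕ) F (Icc x₀ (x₀ + r)) := hF.mono hsub
  have hC : ∀ y ∈ Icc x₀ (x₀ + r),
      ‖iteratedDerivWithin (n + 1) F (Icc x₀ (x₀ + r)) y‖ ≤ K := by
    intro y hy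
    rw [Real.norm_eq_abs, iterWithin_eq hU hF hab' hsub hy le_rfl]
    exact hK y hy
  have B := taylor_mean_remainder_bound hab hFIcc hx hC
  rw [taylor_within_apply] at B
  have hsum : ∑ i ∈ Finset.range (n + 1),
      ((i ! : ℝ)⁻¹ * (x₀ + h - x₀) ^ i) • iteratedDerivWithin i F (Icc x₀ (x₀ + r)) x₀
      = ∑ i ∈ Finset.range (n + 1), (i ! : ℝ)⁻¹ * h ^ i * iteratedDeriv i F x₀ := by
    refine Finset.sum_congr rfl fun i hi => ?_
    rw [iterWithin_eq hU hF hab' hsub (left_mem_Icc.2 hab)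
      (show (i : WithTop ℕ∞) ≤ ((n+1:ℕ):WithTop ℕ∞) from by exact_mod_cast (Finset.mem_range.1 hi).le)]
    simp only [smul_eq_mul]; ring
  rw [hsum] at B
  have : x₀ + h - x₀ = h := by ring
  rw [this] at B
  exact (Real.norm_eq_abs _ ▸ B)

lemma taylor_two_sided (F : ℝ → ℝ) (n : ℕ) {U : Set ℝ} (hU : IsOpen U)
    (hF : ContDiffOn ℝ (n + 1 : ℕ) F U) (x₀ r K : ℝ) (hr : 0 < r)
    (hsub : Icc (x₀ - r) (x₀ + r) ⊆ U)
    (hK : ∀ y ∈ Icc (x₀ - r) (x₀ + r), |iteratedDeriv (n + 1) F y| ≤ K)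
    (h : ℝ) (hh : |h| ≤ r) :
    |F (x₀ + h) - ∑ i ∈ Finset.range (n + 1),
        (i ! : ℝ)⁻¹ * h ^ i * iteratedDeriv i F x₀|
      ≤ K * |h| ^ (n + 1) / n ! := by
  rcases le_or_gt 0 h with h0 | h0
  · have hsub' : Icc x₀ (x₀ + r) ⊆ U :=
      (Icc_subset_Icc (by linarith) le_rfl).trans hsub
    have hK' : ∀ y ∈ Icc x₀ (x₀ + r), |iteratedDeriv (n + 1) F y| ≤ K := fun y hy =>
      hK y ⟨by linarith [hy.1], hy.2⟩
    have := taylor_right F n hU hF x₀ r K hr hsub' hK' h h0 (by rwa [abs_of_nonneg h0] at hh)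
    rwa [abs_of_nonneg h0]
  · -- reflect
    set G : ℝ → ℝ := fun t => F (2 * x₀ - t) with hG
    have hcont : ContDiff ℝ (n + 1 : ℕ) (fun t : ℝ => 2 * x₀ - t) :=
      contDiff_const.sub contDiff_id
    have hU' : IsOpen ((fun t : ℝ => 2 * x₀ - t) ⁻¹' U) :=
      hU.preimage (continuous_const.sub continuous_id)
    have hGc : ContDiffOn ℝ (n + 1 : ℕ) G ((fun t : ℝ => 2 * x₀ - t) ⁻¹' U) :=
      hF.comp hcont.contDiffOn (fun x hx => hx)
    have hiter : ∀ (i : ℕ) (a : ℝ),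
        iteratedDeriv i G a = (-1 : ℝ) ^ i * iteratedDeriv i F (2 * x₀ - a) := by
      intro i a
      have hGe : G = fun t => (fun u => F (2 * x₀ + u)) (-t) := by
        funext t
        show F (2 * x₀ - t) = F (2 * x₀ + -t)
        rw [sub_eq_add_neg]
      have key := iteratedDeriv_comp_neg i (fun u => F (2 * x₀ + u)) a
      have key2 := iteratedDeriv_comp_const_add i F (2 * x₀)
      rw [hGe, key, key2]
      simp only [smul_eq_mul]
      norm_num [sub_eq_add_neg]
    have hsub' : Icc x₀ (x₀ + r) ⊆ (fun t : ℝ => 2 * x₀ - t) ⁻¹' U := by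
      intro y hy
      exact hsub ⟨by simp; linarith [hy.2], by simp; linarith [hy.1]⟩
    have hK' : ∀ y ∈ Icc x₀ (x₀ + r), |iteratedDeriv (n + 1) G y| ≤ K := by
      intro y hy
      rw [hiter, abs_mul, abs_pow, abs_neg, abs_one, one_pow, one_mul]
      exact hK _ ⟨by linarith [hy.2], by linarith [hy.1]⟩
    have hmh : 0 ≤ -h := by linarith
    have hmhr : -h ≤ r := by rw [abs_of_neg h0] at hh; linarith
    have B := taylor_right G n hU' hGc x₀ r K hr hsub' hK' (-h) hmh hmhr
    have e1 : G (x₀ + -h) = F (x₀ + h) := by simp only [hG]; ring_nf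
    have e2 : ∑ i ∈ Finset.range (n + 1), (i ! : ℝ)⁻¹ * (-h) ^ i * iteratedDeriv i G x₀
        = ∑ i ∈ Finset.range (n + 1), (i ! : ℝ)⁻¹ * h ^ i * iteratedDeriv i F x₀ := by
      refine Finset.sum_congr rfl fun i _ => ?_
      rw [hiter]
      have : (2 : ℝ) * x₀ - x₀ = x₀ := by ring
      rw [this]
      have : (-h : ℝ) ^ i * ((-1 : ℝ) ^ i * iteratedDeriv i F x₀)
          = h ^ i * iteratedDeriv i F x₀ := by
        rw [← mul_assoc, ← mul_pow]; ring_nf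
      rw [mul_assoc, this, mul_assoc]
    have e3 : (-h : ℝ) ^ (n + 1) = |h| ^ (n + 1) := by rw [abs_of_neg h0]
    rw [e1, e2, e3] at B
    exact B

lemma coef_bounds (ρ k η : ℝ) (hρ : 0 < ρ) (hk : 0 < k) (hη : |η| ≤ ρ * k) :
    |(-3 * η ^ 2 + k ^ 2)| ≤ (9 * ρ^2 + 12 * ρ + 6) * k^2 ∧
    |(9 * η ^ 2 + 6 * k * η - 6 * k ^ 2)| ≤ (9 * ρ^2 + 12 * ρ + 6) * k^2 ∧
    |(3 * η ^ 2 + 6 * k * η + 2 * k ^ 2)| ≤ (9 * ρ^2 + 12 * ρ + 6) * k^2 := by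
  have hη2 : η^2 ≤ ρ^2 * k^2 := by nlinarith [sq_abs η, abs_nonneg η]
  have hηl := abs_le.1 hη
  refine ⟨?_, ?_, ?_⟩ <;> rw [abs_le] <;> constructor <;>
    nlinarith [sq_nonneg k, sq_nonneg η, mul_pos hρ hk]

lemma eta_cube (K ρ k η : ℝ) (hK : 0 ≤ K) (hη : |η| ≤ ρ * k) :
    K * |η| ^ (2+1) / 2 ≤ K * ρ^3 * k^3 / 2 := by
  have h3 : |η| ^ 3 ≤ (ρ * k) ^ 3 := pow_le_pow_left₀ (abs_nonneg η) hη 3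
  nlinarith [mul_le_mul_of_nonneg_left h3 hK]

lemma final_ineq (K ρ k : ℝ) (hK : 0 ≤ K) (hρ : 0 < ρ) (hk : 0 < k) :
    K * ρ^3 * k^3 / 2 + 4/3 * ((9 * ρ^2 + 12 * ρ + 6) * K) * k^3
      ≤ (K * ρ^3 / 2 + 8 * (9 * ρ^2 + 12 * ρ + 6) * K / 3 + 1) * k^3 := by
  nlinarith [mul_nonneg (mul_nonneg (show (0:ℝ) ≤ 9 * ρ^2 + 12 * ρ + 6 by positivity) hK)
      (pow_nonneg hk.le 3), pow_nonneg hk.le 3]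

set_option maxHeartbeats 2000000 in
/-- Third-order accuracy of the derivative of the cubic Lagrange interpolant at the
nodes `s−2k, s−k, s, s+k`, evaluated at `s+η` with `|η| ≤ ρk` (second row of the
interpolation matrix `I⁽⁴⁾(k,η)`). -/
theorem cubic_lagrange_interpolant_derivative_third_order
    (s ρ : ℝ) (hρ : 0 < ρ) (f : ℝ → ℝ)
    (U : Set ℝ) (hU : IsOpen U) (hs : s ∈ U) (hf : ContDiffOn ℝ 4 f U) :
    ∃ M > 0, ∃ k₀ > 0, ∀ k : ℝ, 0 < k → k < k₀ → ∀ η : ℝ, |η| ≤ ρ * k →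
      |deriv f (s + η) - (1 / (6 * k ^ 3)) *
        ((-3 * η ^ 2 + k ^ 2) * f (s - 2 * k)
          + (9 * η ^ 2 + 6 * k * η - 6 * k ^ 2) * f (s - k)
          + (-9 * η ^ 2 - 12 * k * η + 3 * k ^ 2) * f s
          + (3 * η ^ 2 + 6 * k * η + 2 * k ^ 2) * f (s + k))| ≤ M * k ^ 3 := by
  obtain ⟨ε, hε, hball⟩ := Metric.isOpen_iff.mp hU s hs
  set δ := ε / 2 with hδdef
  have hδ : 0 < δ := by positivity
  have hab : s - δ < s + δ := by linarith
  obtain ⟨ε, hε, hball⟩ := Metric.isOpen_iff.mp hU s hs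
  set δ := ε / 2 with hδdef
  have hδ : 0 < δ := by positivity
  have hab : s - δ < s + δ := by linarith
  have hsub : Icc (s - δ) (s + δ) ⊆ U := by
    intro y hy
    apply hball
    rw [Metric.mem_ball, Real.dist_eq]
    have h1 := hy.1; have h2 := hy.2
    rw [abs_lt]; constructor <;> simp only [hδdef] at * <;> linarith
  have hcontW : ContinuousOn (iteratedDerivWithin 4 f (Icc (s-δ) (s+δ))) (Icc (s-δ) (s+δ)) :=
    (hf.mono hsub).continuousOn_iteratedDerivWithin (le_refl _) (uniqueDiffOn_Icc hab)
  have hcont : ContinuousOn (iteratedDeriv 4 f) (Icc (s-δ) (s+δ)) :=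
    hcontW.congr fun y hy => (iterWithin_eq hU hf hab hsub hy (by norm_num)).symm
  obtain ⟨K, hK⟩ := isCompact_Icc.exists_bound_of_continuousOn hcont
  have hK0 : 0 ≤ K := le_trans (norm_nonneg _) (hK s ⟨by linarith, by linarith⟩)
  have hKabs : ∀ y ∈ Icc (s - δ) (s + δ), |iteratedDeriv (3 + 1) f y| ≤ K := by
    intro y hy
    have := hK y hy
    rw [Real.norm_eq_abs] at this
    convert this using 3
  have hf4 : ContDiffOn ℝ ((3:ℕ)+1 : ℕ) f U := by exact_mod_cast hf
  have hg3 : ContDiffOn ℝ ((2:ℕ)+1 : ℕ) (deriv f) U := by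
    have := hf.deriv_of_isOpen hU (show (3:WithTop ℕ∞) + 1 ≤ 4 by norm_num)
    exact_mod_cast this
  have hKg : ∀ y ∈ Icc (s - δ) (s + δ), |iteratedDeriv (2 + 1) (deriv f) y| ≤ K := by
    intro y hy
    have e : iteratedDeriv (2 + 1) (deriv f) y = iteratedDeriv (3 + 1) f y := by
      rw [← iteratedDeriv_succ']
    rw [e]; exact hKabs y hy
  have hA₀ : (0:ℝ) < 9 * ρ^2 + 12 * ρ + 6 := by positivity
  refine ⟨K * ρ^3 / 2 + 8 * (9 * ρ^2 + 12 * ρ + 6) * K / 3 + 1, ?_, δ / (ρ + 2), by positivity, ?_⟩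
  · nlinarith [mul_nonneg hK0 (pow_nonneg hρ.le 3), mul_nonneg hA₀.le hK0]
  intro k hk0 hkδ η hη
  have hkδ' : (ρ + 2) * k < δ := by
    have h := (lt_div_iff₀ (by linarith : (0:ℝ) < ρ + 2)).mp hkδ
    linarith [h]
  have hρk : 0 < ρ * k := mul_pos hρ hk0
  have h2k : 2 * k ≤ δ := by linarith
  have hηδ : |η| ≤ δ := le_trans hη (by linarith)
  obtain ⟨D1, hD1⟩ : ∃ x, deriv f s = x := ⟨_, rfl⟩
  obtain ⟨D2, hD2⟩ : ∃ x, iteratedDeriv 2 f s = x := ⟨_, rfl⟩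
  obtain ⟨D3, hD3⟩ : ∃ x, iteratedDeriv 3 f s = x := ⟨_, rfl⟩
  have hsum3 : ∀ h : ℝ, ∑ i ∈ Finset.range (3+1), (i ! : ℝ)⁻¹ * h ^ i * iteratedDeriv i f s
      = f s + D1 * h + D2 * h^2/2 + D3 * h^3/6 := by
    intro h
    simp [Finset.sum_range_succ, Nat.factorial]
    rw [hD1, hD2, hD3]
    ring
  have hsum2 : ∑ i ∈ Finset.range (2+1), (i ! : ℝ)⁻¹ * η ^ i * iteratedDeriv i (deriv f) s
      = D1 + D2 * η + D3 * η^2/2 := by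
    simp [Finset.sum_range_succ, Nat.factorial, ← iteratedDeriv_succ']
    norm_num
    rw [hD1, hD2, hD3]
    ring
  have hfact3 : ((3:ℕ)! : ℝ) = 6 := by norm_num [Nat.factorial]
  have hfact2 : ((2:ℕ)! : ℝ) = 2 := by norm_num [Nat.factorial]
  have hRgen : ∀ h : ℝ, |h| ≤ δ →
      |f s + D1 * h + D2 * h^2/2 + D3 * h^3/6 - f (s + h)| ≤ K * |h|^(3+1) / 6 := by
    intro h hh
    have e := taylor_two_sided f 3 hU hf4 s δ K hδ hsub hKabs h hh
    rw [hsum3 h, abs_sub_comm, hfact3] at e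
    exact e
  have habs2k : |(-(2*k))| ≤ δ := by rw [abs_neg, abs_of_pos (by linarith)]; linarith
  have habsk : |(-k)| ≤ δ := by rw [abs_neg, abs_of_pos hk0]; linarith
  have habsk' : |k| ≤ δ := by rw [abs_of_pos hk0]; linarith
  obtain ⟨R1, hR1e⟩ : ∃ x, f s + D1 * (-(2*k)) + D2 * (-(2*k))^2/2 + D3 * (-(2*k))^3/6
      - f (s - 2*k) = x := ⟨_, rfl⟩
  obtain ⟨R2, hR2e⟩ : ∃ x, f s + D1 * (-k) + D2 * (-k)^2/2 + D3 * (-k)^3/6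
      - f (s - k) = x := ⟨_, rfl⟩
  obtain ⟨R4, hR4e⟩ : ∃ x, f s + D1 * k + D2 * k^2/2 + D3 * k^3/6
      - f (s + k) = x := ⟨_, rfl⟩
  have hR1 : |R1| ≤ 8/3 * K * k^4 := by
    have e := hRgen (-(2*k)) habs2k
    rw [show s + -(2*k) = s - 2*k by ring, abs_neg,
      abs_of_pos (by linarith : (0:ℝ) < 2*k), hR1e] at e
    calc |R1| ≤ K * (2*k)^(3+1) / 6 := e
      _ = 8/3 * K * k^4 := by ring
  have hR2 : |R2| ≤ 8/3 * K * k^4 := by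
    have e := hRgen (-k) habsk
    rw [show s + -k = s - k by ring, abs_neg, abs_of_pos hk0, hR2e] at e
    calc |R2| ≤ K * k^(3+1) / 6 := e
      _ ≤ 8/3 * K * k^4 := by linarith [mul_nonneg hK0 (pow_nonneg hk0.le 4)]
  have hR4 : |R4| ≤ 8/3 * K * k^4 := by
    have e := hRgen k habsk'
    rw [abs_of_pos hk0, hR4e] at e
    calc |R4| ≤ K * k^(3+1) / 6 := e
      _ ≤ 8/3 * K * k^4 := by linarith [mul_nonneg hK0 (pow_nonneg hk0.le 4)]
  obtain ⟨A, hAe⟩ : ∃ x, deriv f (s + η) - (D1 + D2 * η + D3 * η^2/2) = x := ⟨_, rfl⟩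
  have hA : |A| ≤ K * ρ^3 * k^3 / 2 := by
    have e := taylor_two_sided (deriv f) 2 hU hg3 s δ K hδ hsub hKg η hηδ
    rw [hsum2, hfact2, hAe] at e
    calc |A| ≤ K * |η|^(2+1) / 2 := e
      _ ≤ K * ρ^3 * k^3 / 2 := eta_cube K ρ k η hK0 hη
  obtain ⟨hc1, hc2, hc4⟩ := coef_bounds ρ k η hρ hk0 hη
  have hk3 : (k : ℝ) ≠ 0 := ne_of_gt hk0
  have key : deriv f (s + η) - (1 / (6 * k ^ 3)) *
        ((-3 * η ^ 2 + k ^ 2) * f (s - 2 * k)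
          + (9 * η ^ 2 + 6 * k * η - 6 * k ^ 2) * f (s - k)
          + (-9 * η ^ 2 - 12 * k * η + 3 * k ^ 2) * f s
          + (3 * η ^ 2 + 6 * k * η + 2 * k ^ 2) * f (s + k))
      = A + (1 / (6 * k ^ 3)) *
          ((-3 * η ^ 2 + k ^ 2) * R1
            + (9 * η ^ 2 + 6 * k * η - 6 * k ^ 2) * R2
            + (3 * η ^ 2 + 6 * k * η + 2 * k ^ 2) * R4) := by
    rw [← hAe, ← hR1e, ← hR2e, ← hR4e]
    field_simp
    ring
  rw [key]
  have hb0 : (0:ℝ) ≤ (9 * ρ^2 + 12 * ρ + 6) * k^2 := by positivity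
  have b1 : |(-3 * η ^ 2 + k ^ 2) * R1|
      ≤ (9 * ρ^2 + 12 * ρ + 6) * k^2 * (8/3 * K * k^4) := by
    rw [abs_mul]; exact mul_le_mul hc1 hR1 (abs_nonneg _) hb0
  have b2 : |(9 * η ^ 2 + 6 * k * η - 6 * k ^ 2) * R2|
      ≤ (9 * ρ^2 + 12 * ρ + 6) * k^2 * (8/3 * K * k^4) := by
    rw [abs_mul]; exact mul_le_mul hc2 hR2 (abs_nonneg _) hb0
  have b4 : |(3 * η ^ 2 + 6 * k * η + 2 * k ^ 2) * R4|
      ≤ (9 * ρ^2 + 12 * ρ + 6) * k^2 * (8/3 * K * k^4) := by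
    rw [abs_mul]; exact mul_le_mul hc4 hR4 (abs_nonneg _) hb0
  have hS : |(-3 * η ^ 2 + k ^ 2) * R1
            + (9 * η ^ 2 + 6 * k * η - 6 * k ^ 2) * R2
            + (3 * η ^ 2 + 6 * k * η + 2 * k ^ 2) * R4|
      ≤ 3 * ((9 * ρ^2 + 12 * ρ + 6) * k^2 * (8/3 * K * k^4)) := by
    have t1 := abs_add_le ((-3 * η ^ 2 + k ^ 2) * R1 + (9 * η ^ 2 + 6 * k * η - 6 * k ^ 2) * R2)
      ((3 * η ^ 2 + 6 * k * η + 2 * k ^ 2) * R4)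
    have t2 := abs_add_le ((-3 * η ^ 2 + k ^ 2) * R1) ((9 * η ^ 2 + 6 * k * η - 6 * k ^ 2) * R2)
    linarith
  obtain ⟨S, hSe⟩ : ∃ x, (-3 * η ^ 2 + k ^ 2) * R1
            + (9 * η ^ 2 + 6 * k * η - 6 * k ^ 2) * R2
            + (3 * η ^ 2 + 6 * k * η + 2 * k ^ 2) * R4 = x := ⟨_, rfl⟩
  rw [hSe] at hS ⊢
  have hpos : (0:ℝ) < 1 / (6 * k^3) := by positivity
  calc |A + 1 / (6 * k ^ 3) * S|
      ≤ |A| + |1 / (6 * k ^ 3) * S| := abs_add_le _ _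
    _ = |A| + 1 / (6 * k^3) * |S| := by rw [abs_mul, abs_of_pos hpos]
    _ ≤ K * ρ^3 * k^3 / 2
        + 1 / (6 * k^3) * (3 * ((9 * ρ^2 + 12 * ρ + 6) * k^2 * (8/3 * K * k^4))) :=
      add_le_add hA (mul_le_mul_of_nonneg_left hS hpos.le)
    _ = K * ρ^3 * k^3 / 2 + 4/3 * ((9 * ρ^2 + 12 * ρ + 6) * K) * k^3 := by
      field_simp; ring
    _ ≤ (K * ρ^3 / 2 + 8 * (9 * ρ^2 + 12 * ρ + 6) * K / 3 + 1) * k^3 :=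
      final_ineq K ρ k hK0 hρ hk0
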